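/- A set S ⊆ ℝ² is staircase connected if and only if S is orthogonally connected and orthogonally convex. -/

import Mathlib

open Set MeasureTheory Bornology
open scoped ENNReal

noncomputable section

/-- `ℝ^d` as Euclidean space. -/
abbrev EucR (d : ℕ) := EuclideanSpace ℝ (Fin d)

/-- The segment from `x` to `y` is parallel to a coordinate axis
(all coordinates except possibly one agree). -/
def IsOrthSeg {d : ℕ} (x y : EucR d) : Prop :=
  ∃ i : Fin d, ∀ j, j ≠ i → x j = y j

/-- `p 0, p 1, …, p n` is an orthogonal polygonal path contained in `S`. -/
def IsOrthPathIn {d : ℕ} (S : Set (EucR d)) (p : ℕ → EucR d) (n : ℕ) : Prop :=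
  ∀ k, k < n → IsOrthSeg (p k) (p (k + 1)) ∧ segment ℝ (p k) (p (k + 1)) ⊆ S

/-- `S` is orthogonally connected. -/
def OrthConnected {d : ℕ} (S : Set (EucR d)) : Prop :=
  ∀ x ∈ S, ∀ y ∈ S, ∃ n : ℕ, ∃ p : ℕ → EucR d,
    p 0 = x ∧ p n = y ∧ IsOrthPathIn S p n

/-- An orthogonal path is a staircase if all edges parallel to the same axis
point in the same direction. -/
def IsStaircaseIn {d : ℕ} (S : Set (EucR d)) (p : ℕ → EucR d) (n : ℕ) : Prop :=
  IsOrthPathIn S p n ∧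
    ∀ k, k < n → ∀ l, l < n → ∀ i : Fin d,
      (∀ j, j ≠ i → p k j = p (k + 1) j) → (∀ j, j ≠ i → p l j = p (l + 1) j) →
        0 ≤ (p (k + 1) i - p k i) * (p (l + 1) i - p l i)

/-- `S` is staircase connected. -/
def StaircaseConnected {d : ℕ} (S : Set (EucR d)) : Prop :=
  ∀ x ∈ S, ∀ y ∈ S, ∃ n : ℕ, ∃ p : ℕ → EucR d,
    p 0 = x ∧ p n = y ∧ IsStaircaseIn S p n

/-- `S` is orthogonally convex. -/
def OrthConvex {d : ℕ} (S : Set (EucR d)) : Prop :=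
  ∀ x ∈ S, ∀ y ∈ S, IsOrthSeg x y → segment ℝ x y ⊆ S

/-- A convex body: compact convex with nonempty interior. -/
def IsConvexBody {d : ℕ} (K : Set (EucR d)) : Prop :=
  Convex ℝ K ∧ IsCompact K ∧ (interior K).Nonempty

/-- The point of `ℝ²` with coordinates `(a, b)`. -/
def pt2 (a b : ℝ) : EucR 2 := (WithLp.equiv 2 (Fin 2 → ℝ)).symm ![a, b]

/-- Horizontal width of `S` at `x`: the length of the connected component
containing `x` of the intersection of `S` with the horizontal line through `x`. -/
def hw (S : Set (EucR 2)) (x : EucR 2) : ℝ≥0∞ :=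
  volume (connectedComponentIn {t : ℝ | pt2 t (x 1) ∈ S} (x 0))

/-- Vertical width of `S` at `x`. -/
def vw (S : Set (EucR 2)) (x : EucR 2) : ℝ≥0∞ :=
  volume (connectedComponentIn {t : ℝ | pt2 (x 0) t ∈ S} (x 1))

/-- The set of unit directions from `x` towards points of `K`. -/
def dirSet (x : EucR 2) (K : Set (EucR 2)) : Set (EucR 2) :=
  {u | ∃ y ∈ K, y ≠ x ∧ u = ‖y - x‖⁻¹ • (y - x)}

/-- `α_x(K)`: the angular (1-dimensional Hausdorff) measure of the set of unit
directions from `x` towards other points of `K`. -/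
def angMeasure (x : EucR 2) (K : Set (EucR 2)) : ℝ≥0∞ :=
  μH[1] (dirSet x K)

/-- The half-line from `x` through `y`. -/
def rayFrom (x y : EucR 2) : Set (EucR 2) := {z | ∃ t : ℝ, 0 ≤ t ∧ z = x + t • (y - x)}

/-- `T_x(K)`: the union of the half-lines from `x` through the points of `K \ {x}`. -/
def TCone (x : EucR 2) (K : Set (EucR 2)) : Set (EucR 2) := ⋃ y ∈ K \ {x}, rayFrom x y

/-- `K` is obtuse: at every boundary point `x`, either `α_x(K) > π/2`, or
`α_x(K) = π/2` and `T_x(K) \ {x}` is not open. -/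
def Obtuse (K : Set (EucR 2)) : Prop :=
  ∀ x ∈ frontier K,
    ENNReal.ofReal (Real.pi / 2) < angMeasure x K ∨
      (angMeasure x K = ENNReal.ofReal (Real.pi / 2) ∧ ¬ IsOpen (TCone x K \ {x}))

/-- Inclusion of `ℝ² × ℝ` into `ℝ³`. -/
def incl3 (q : EucR 2) (t : ℝ) : EucR 3 := (WithLp.equiv 2 (Fin 3 → ℝ)).symm ![q 0, q 1, t]

/-- A piece of a continuum `C`: the closure of a connected component of
`C \ {x}` for some cut point `x` of `C`. -/
def IsPiece (C P : Set (EucR 2)) : Prop :=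
  ∃ x ∈ C, ¬ IsPreconnected (C \ {x}) ∧
    ∃ y ∈ C \ {x}, P = closure (connectedComponentIn (C \ {x}) y)

/-- `f` is unimodal on `[a,b]`: non-decreasing on `[a,c]`, non-increasing on `[c,b]`
for some `c ∈ (a,b)`. -/
def Unimodal (f : ℝ → ℝ) (a b : ℝ) : Prop :=
  ∃ c ∈ Ioo a b, MonotoneOn f (Icc a c) ∧ AntitoneOn f (Icc c b)

/-- `a` is an s-extreme point of `M`: it belongs to a staircase in `M` only as an
endpoint. -/
def SExtreme (M : Set (EucR 2)) (a : EucR 2) : Prop :=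
  a ∈ M ∧ ∀ n : ℕ, ∀ γ : ℕ → EucR 2, IsStaircaseIn M γ n →
    a ∈ ⋃ k ∈ Set.Iio n, segment ℝ (γ k) (γ (k + 1)) → a = γ 0 ∨ a = γ n

/-- `M ⊆ ℝ²` is a strip: the preimage of an interval of `ℝ` under a nonzero
linear functional (this includes half-planes and the whole plane). -/
def IsStrip (M : Set (EucR 2)) : Prop :=
  ∃ f : EucR 2 →ₗ[ℝ] ℝ, f ≠ 0 ∧ ∃ I : Set ℝ, I.OrdConnected ∧ M = f ⁻¹' I

end

/-!
A staircase meets every axis-parallel line in a segment, because along each coordinate it moves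
monotonically; hence it contains the segment between two of its points on such a line, which gives
orthogonal convexity. Conversely, in an orthogonally connected and orthogonally convex planar set a
shortest orthogonal path is a staircase: minimality forbids degenerate edges and two consecutive
edges on one line, so the edges alternate between the two axes, and a U-turn (two parallel edges
joined by a perpendicular one and pointing in opposite directions) could be replaced by two edges.
-/

def IsAxisSeg {d : ℕ} (i : Fin d) (x y : EucR d) : Prop :=
  ∀ j, j ≠ i → x j = y j

section Segments

variable {d : ℕ}

lemma IsAxisSeg.isOrthSeg {i : Fin d} {x y : EucR d} (h : IsAxisSeg i x y) : IsOrthSeg x y :=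
  ⟨i, h⟩

lemma IsAxisSeg.symm {i : Fin d} {x y : EucR d} (h : IsAxisSeg i x y) : IsAxisSeg i y x :=
  fun j hj => (h j hj).symm

lemma IsOrthSeg.symm {x y : EucR d} (h : IsOrthSeg x y) : IsOrthSeg y x :=
  let ⟨i, hi⟩ := h
  ⟨i, fun j hj => (hi j hj).symm⟩

lemma IsOrthSeg.isAxisSeg_of_ne {x y : EucR d} (h : IsOrthSeg x y) {i : Fin d} (hi : x i ≠ y i) :
    IsAxisSeg i x y := by
  obtain ⟨w, hw⟩ := h
  obtain rfl : w = i := by_contra fun hwi => hi (hw i (Ne.symm hwi))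
  exact hw

lemma IsAxisSeg.apply_ne {i : Fin d} {x y : EucR d} (h : IsAxisSeg i x y) (hxy : x ≠ y) :
    x i ≠ y i := fun hi =>
  hxy <| PiLp.ext fun j => if hj : j = i then hj ▸ hi else h j hj

lemma apply_mem_uIcc_of_mem_segment {x y z : EucR d} (hz : z ∈ segment ℝ x y) (j : Fin d) :
    z j ∈ uIcc (x j) (y j) := by
  obtain ⟨t, s, ht, hs, hts, rfl⟩ := hz
  rw [← segment_eq_uIcc]
  exact ⟨t, s, ht, hs, hts, by simp⟩

lemma mem_segment_of_isAxisSeg {i : Fin d} {x y z : EucR d} (hxy : IsAxisSeg i x y)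
    (hxz : IsAxisSeg i x z) (hz : z i ∈ uIcc (x i) (y i)) : z ∈ segment ℝ x y := by
  rw [← segment_eq_uIcc] at hz
  obtain ⟨t, s, ht, hs, hts, h⟩ := hz
  refine ⟨t, s, ht, hs, hts, PiLp.ext fun j => ?_⟩
  simp only [PiLp.add_apply, PiLp.smul_apply, smul_eq_mul]
  by_cases hj : j = i
  · subst hj; exact h
  · rw [← hxy j hj, ← hxz j hj]
    linear_combination x j * hts

end Segments

lemma exists_mem_uIcc_succ {f : ℕ → ℝ} {v : ℝ} {n : ℕ} (hn : 0 < n)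
    (hv : v ∈ uIcc (f 0) (f n)) : ∃ k < n, v ∈ uIcc (f k) (f (k + 1)) := by
  induction n, hn using Nat.le_induction with
  | base => exact ⟨0, one_pos, hv⟩
  | succ n hn ih =>
    rcases uIcc_subset_uIcc_union_uIcc hv with hv | hv
    · obtain ⟨k, hk, hvk⟩ := ih hv
      exact ⟨k, hk.trans n.lt_succ_self, hvk⟩
    · exact ⟨n, n.lt_succ_self, hv⟩

lemma mem_uIcc_or_mem_uIcc_of_mul_nonpos {a b c : ℝ} (h : (b - a) * (c - b) ≤ 0) :
    c ∈ uIcc a b ∨ a ∈ uIcc c b := by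
  by_contra! h'
  simp only [mem_uIcc, not_or, not_and_or, not_le] at h'
  obtain ⟨⟨h1 | h1, h2 | h2⟩, ⟨h3 | h3, h4 | h4⟩⟩ := h' <;> nlinarith

section Staircase

variable {d : ℕ} {S : Set (EucR d)} {p : ℕ → EucR d} {n : ℕ}

lemma IsStaircaseIn.mul_sub_nonneg (hp : IsStaircaseIn S p n) {k l : ℕ} (hk : k < n) (hl : l < n)
    (j : Fin d) : 0 ≤ (p (k + 1) j - p k j) * (p (l + 1) j - p l j) := by
  by_cases hkj : p k j = p (k + 1) j
  · simp [hkj]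
  by_cases hlj : p l j = p (l + 1) j
  · simp [hlj]
  exact hp.2 k hk l hl j ((hp.1 k hk).1.isAxisSeg_of_ne hkj) ((hp.1 l hl).1.isAxisSeg_of_ne hlj)

/-- The increments of a coordinate along a staircase all have the same sign, so they vanish when
they sum to zero. -/
lemma IsStaircaseIn.apply_eq_of_apply_eq (hp : IsStaircaseIn S p n) {j : Fin d}
    (hj : p 0 j = p n j) {k : ℕ} (hk : k ≤ n) : p k j = p 0 j := by
  set Δ : ℕ → ℝ := fun k => p (k + 1) j - p k j
  have hsum : ∑ k ∈ Finset.range n, Δ k = 0 := by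
    rw [Finset.sum_range_sub (fun k => p k j), hj, sub_self]
  have hΔ : ∀ m < n, Δ m = 0 := fun m hm => by
    refine mul_self_eq_zero.1 (le_antisymm ?_ (mul_self_nonneg _))
    calc Δ m * Δ m ≤ ∑ k ∈ Finset.range n, Δ m * Δ k :=
          Finset.single_le_sum (fun k hk => hp.mul_sub_nonneg hm (Finset.mem_range.1 hk) j)
            (Finset.mem_range.2 hm)
      _ = 0 := by rw [← Finset.mul_sum, hsum, mul_zero]
  induction k with
  | zero => rfl
  | succ k ih => rw [← ih (by omega), ← sub_eq_zero]; exact hΔ k (by omega)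

end Staircase

lemma StaircaseConnected.orthConnected {d : ℕ} {S : Set (EucR d)} (h : StaircaseConnected S) :
    OrthConnected S := fun x hx y hy =>
  let ⟨n, p, hp0, hpn, hp⟩ := h x hx y hy
  ⟨n, p, hp0, hpn, hp.1⟩

lemma StaircaseConnected.orthConvex {d : ℕ} {S : Set (EucR d)} (h : StaircaseConnected S) :
    OrthConvex S := by
  rintro x hx y hy ⟨i, hxy⟩ z hz
  obtain ⟨n, p, rfl, rfl, hp⟩ := h _ hx _ hy
  rcases Nat.eq_zero_or_pos n with rfl | hn
  · rw [segment_same, mem_singleton_iff] at hz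
    exact hz ▸ hx
  obtain ⟨k, hk, hzk⟩ := exists_mem_uIcc_succ (f := fun k => p k i) hn
    (apply_mem_uIcc_of_mem_segment hz i)
  have hconst : ∀ m ≤ n, IsAxisSeg i (p 0) (p m) := fun m hm j hj =>
    (hp.apply_eq_of_apply_eq (hxy j hj) hm).symm
  have hzx : IsAxisSeg i (p 0) z := fun j hj => by
    simpa [hxy j hj, eq_comm] using apply_mem_uIcc_of_mem_segment hz j
  refine (hp.1 k hk).2 (mem_segment_of_isAxisSeg ?_ ?_ hzk)
  · exact fun j hj => (hconst k hk.le j hj).symm.trans (hconst (k + 1) hk j hj)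
  · exact fun j hj => (hconst k hk.le j hj).symm.trans (hzx j hj)

section Paths

variable {d : ℕ} {S : Set (EucR d)}

lemma isOrthPathIn_zero (p : ℕ → EucR d) : IsOrthPathIn S p 0 :=
  fun _ h => absurd h (Nat.not_lt_zero _)

lemma IsOrthPathIn.mono {p : ℕ → EucR d} {n m : ℕ} (hp : IsOrthPathIn S p n) (hmn : m ≤ n) :
    IsOrthPathIn S p m :=
  fun k hk => hp k (by omega)

lemma IsOrthPathIn.shift {p : ℕ → EucR d} {n : ℕ} (hp : IsOrthPathIn S p n) (s : ℕ) :
    IsOrthPathIn S (fun k => p (s + k)) (n - s) :=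
  fun k hk => hp (s + k) (by omega)

lemma exists_isOrthPathIn_one {x y : EucR d} (hxy : IsOrthSeg x y) (hS : segment ℝ x y ⊆ S) :
    ∃ p : ℕ → EucR d, p 0 = x ∧ p 1 = y ∧ IsOrthPathIn S p 1 :=
  ⟨fun k => if k = 0 then x else y, rfl, rfl, fun k hk => by
    obtain rfl : k = 0 := by omega
    exact ⟨hxy, hS⟩⟩

lemma IsOrthPathIn.append {p q : ℕ → EucR d} {n m : ℕ} (hp : IsOrthPathIn S p n)
    (hq : IsOrthPathIn S q m) (h : p n = q 0) :
    ∃ r : ℕ → EucR d, r 0 = p 0 ∧ r (n + m) = q m ∧ IsOrthPathIn S r (n + m) := by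
  set r : ℕ → EucR d := fun k => if k ≤ n then p k else q (k - n)
  have hr : ∀ k, n ≤ k → r k = q (k - n) := fun k hk => by
    by_cases hkn : k ≤ n
    · obtain rfl : k = n := le_antisymm hkn hk
      simp [r, h]
    · simp [r, hkn]
  refine ⟨r, by simp [r], by rw [hr _ (by omega), Nat.add_sub_cancel_left], fun k hk => ?_⟩
  rcases lt_or_ge k n with hkn | hkn
  · simpa [r, hkn.le, Nat.succ_le_of_lt hkn] using hp k hkn
  · rw [hr k hkn, hr (k + 1) (by omega), Nat.sub_add_comm hkn]
    exact hq (k - n) (by omega)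

end Paths

lemma OrthConvex.exists_shortcut_of_mem_uIcc {d : ℕ} {S : Set (EucR d)} (hS : OrthConvex S)
    {w x y z : EucR d} {i : Fin d} (hwx : IsAxisSeg i w x) (hwxS : segment ℝ w x ⊆ S)
    (hxy : IsOrthSeg x y) (hyz : IsAxisSeg i y z) (hz : z ∈ S) (hzi : z i ∈ uIcc (w i) (x i)) :
    ∃ v, IsOrthSeg w v ∧ segment ℝ w v ⊆ S ∧ IsOrthSeg v z ∧ segment ℝ v z ⊆ S := by
  set v : EucR d := WithLp.toLp 2 (Function.update w.ofLp i (z i))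
  have hvi : v i = z i := Function.update_self i (z i) w.ofLp
  have hwv : IsAxisSeg i w v := fun j hj => (Function.update_of_ne hj (z i) w.ofLp).symm
  have hv : v ∈ segment ℝ w x := mem_segment_of_isAxisSeg hwx hwv (hvi ▸ hzi)
  obtain ⟨a, hxya⟩ := hxy
  have hvz : IsOrthSeg v z := ⟨a, fun j hj => if hji : j = i then hji ▸ hvi else
    (hwv j hji).symm.trans <| (hwx j hji).trans <| (hxya j hj).trans (hyz j hji)⟩
  exact ⟨v, hwv.isOrthSeg, ((convex_segment w x).segment_subset (left_mem_segment ℝ w x) hv).trans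
    hwxS, hvz, hS v (hwxS hv) z hz hvz⟩

lemma OrthConvex.exists_shortcut {d : ℕ} {S : Set (EucR d)} (hS : OrthConvex S)
    {w x y z : EucR d} {i : Fin d} (hwx : IsAxisSeg i w x) (hwxS : segment ℝ w x ⊆ S)
    (hxy : IsOrthSeg x y) (hxyi : x i = y i) (hyz : IsAxisSeg i y z) (hyzS : segment ℝ y z ⊆ S)
    (hturn : (x i - w i) * (z i - y i) ≤ 0) :
    ∃ v, IsOrthSeg w v ∧ segment ℝ w v ⊆ S ∧ IsOrthSeg v z ∧ segment ℝ v z ⊆ S := by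
  have hw : w ∈ S := hwxS (left_mem_segment ℝ w x)
  have hz : z ∈ S := hyzS (right_mem_segment ℝ y z)
  rw [← hxyi] at hturn
  rcases mem_uIcc_or_mem_uIcc_of_mul_nonpos hturn with hzi | hwi
  · exact hS.exists_shortcut_of_mem_uIcc hwx hwxS hxy hyz hz hzi
  · rw [segment_symm] at hyzS
    obtain ⟨v, hzv, hzvS, hvw, hvwS⟩ :=
      hS.exists_shortcut_of_mem_uIcc hyz.symm hyzS hxy.symm hwx.symm hw (hxyi ▸ hwi)
    exact ⟨v, hvw.symm, segment_symm ℝ v w ▸ hvwS, hzv.symm, segment_symm ℝ z v ▸ hzvS⟩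

def IsShortestOrthPathIn {d : ℕ} (S : Set (EucR d)) (p : ℕ → EucR d) (n : ℕ) : Prop :=
  IsOrthPathIn S p n ∧
    ∀ m (q : ℕ → EucR d), q 0 = p 0 → q m = p n → IsOrthPathIn S q m → n ≤ m

lemma OrthConnected.exists_isShortestOrthPathIn {d : ℕ} {S : Set (EucR d)} (h : OrthConnected S)
    {x y : EucR d} (hx : x ∈ S) (hy : y ∈ S) :
    ∃ n p, p 0 = x ∧ p n = y ∧ IsShortestOrthPathIn S p n := by
  classical
  have hex := h x hx y hy
  obtain ⟨p, hp0, hpn, hp⟩ := Nat.find_spec hex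
  refine ⟨_, p, hp0, hpn, hp, fun m q hq0 hqm hq => Nat.find_min' hex ⟨q, ?_, ?_, hq⟩⟩
  · rw [hq0, hp0]
  · rw [hqm, hpn]

namespace IsShortestOrthPathIn

variable {d : ℕ} {S : Set (EucR d)} {p : ℕ → EucR d} {n : ℕ}

lemma le_of_isOrthPathIn (hp : IsShortestOrthPathIn S p n) {k m m' : ℕ} (hkm : k + m ≤ n)
    {q : ℕ → EucR d} (hq : IsOrthPathIn S q m') (hq0 : q 0 = p k) (hqm : q m' = p (k + m)) :
    m ≤ m' := by
  obtain ⟨r, hr0, hrm, hr⟩ := (hp.1.mono (by omega : k ≤ n)).append hq hq0.symm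
  obtain ⟨r', hr'0, hr'n, hr'⟩ := hr.append (hp.1.shift (k + m)) (hrm.trans hqm)
  have := hp.2 _ r' (hr'0.trans hr0) (by rw [hr'n, Nat.add_sub_cancel' hkm]) hr'
  omega

lemma ne_succ (hp : IsShortestOrthPathIn S p n) {k : ℕ} (hk : k < n) : p k ≠ p (k + 1) :=
  fun h => absurd (hp.le_of_isOrthPathIn hk (isOrthPathIn_zero fun _ => p k) rfl h) (by omega)

lemma not_isOrthSeg (hp : IsShortestOrthPathIn S p n) (hS : OrthConvex S) {k : ℕ}
    (hk : k + 2 ≤ n) : ¬ IsOrthSeg (p k) (p (k + 2)) := fun h => by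
  have hpk : p k ∈ S := (hp.1 k (by omega)).2 (left_mem_segment ℝ _ _)
  have hpk2 : p (k + 2) ∈ S := (hp.1 (k + 1) (by omega)).2 (right_mem_segment ℝ _ _)
  obtain ⟨q, hq0, hq1, hq⟩ := exists_isOrthPathIn_one h (hS _ hpk _ hpk2 h)
  exact absurd (hp.le_of_isOrthPathIn hk hq hq0 hq1) (by omega)

lemma apply_succ_eq (hp : IsShortestOrthPathIn S p n) (hS : OrthConvex S) {k : ℕ}
    (hk : k + 2 ≤ n) {i : Fin d} (h : IsAxisSeg i (p k) (p (k + 1))) :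
    p (k + 1) i = p (k + 2) i := by
  by_contra hne
  have h' := (hp.1 (k + 1) (by omega)).1.isAxisSeg_of_ne hne
  exact hp.not_isOrthSeg hS hk ⟨i, fun j hj => (h j hj).trans (h' j hj)⟩

lemma mul_sub_pos_of_uTurn (hp : IsShortestOrthPathIn S p n) (hS : OrthConvex S) {k : ℕ}
    (hk : k + 3 ≤ n) {i : Fin d} (h₀ : IsAxisSeg i (p k) (p (k + 1)))
    (h₁ : p (k + 1) i = p (k + 2) i) (h₂ : IsAxisSeg i (p (k + 2)) (p (k + 3))) :
    0 < (p (k + 1) i - p k i) * (p (k + 3) i - p (k + 2) i) := by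
  by_contra! hturn
  obtain ⟨v, hv₁, hv₁S, hv₂, hv₂S⟩ := hS.exists_shortcut h₀ (hp.1 k (by omega)).2
    (hp.1 (k + 1) (by omega)).1 h₁ h₂ (hp.1 (k + 2) (by omega)).2 hturn
  obtain ⟨q₁, hq₁0, hq₁1, hq₁⟩ := exists_isOrthPathIn_one hv₁ hv₁S
  obtain ⟨q₂, hq₂0, hq₂1, hq₂⟩ := exists_isOrthPathIn_one hv₂ hv₂S
  obtain ⟨q, hq0, hq2, hq⟩ := hq₁.append hq₂ (hq₁1.trans hq₂0.symm)
  exact absurd (hp.le_of_isOrthPathIn hk hq (hq0.trans hq₁0) (hq2.trans hq₂1)) (by omega)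

end IsShortestOrthPathIn

lemma isAxisSeg_iff_apply_rev_eq {i : Fin 2} {x y : EucR 2} :
    IsAxisSeg i x y ↔ x i.rev = y i.rev := by
  have hne : ∀ j : Fin 2, j ≠ i ↔ j = i.rev := by revert i; decide
  simp only [IsAxisSeg, hne, forall_eq]

namespace IsShortestOrthPathIn

variable {S : Set (EucR 2)} {p : ℕ → EucR 2} {n : ℕ}

lemma isAxisSeg_add_two (hp : IsShortestOrthPathIn S p n) (hS : OrthConvex S) {k : ℕ}
    (hk : k + 3 ≤ n) {i : Fin 2} (h : IsAxisSeg i (p k) (p (k + 1))) :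
    IsAxisSeg i (p (k + 2)) (p (k + 3)) ∧
      0 < (p (k + 1) i - p k i) * (p (k + 3) i - p (k + 2) i) := by
  have h₁ := hp.apply_succ_eq hS (by omega) h
  have h₁' : IsAxisSeg i.rev (p (k + 1)) (p (k + 2)) := by
    rwa [isAxisSeg_iff_apply_rev_eq, Fin.rev_rev]
  have h₂ : IsAxisSeg i (p (k + 2)) (p (k + 3)) :=
    isAxisSeg_iff_apply_rev_eq.2 (hp.apply_succ_eq hS (by omega) h₁')
  exact ⟨h₂, hp.mul_sub_pos_of_uTurn hS hk h h₁ h₂⟩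

lemma isAxisSeg_add_two_mul (hp : IsShortestOrthPathIn S p n) (hS : OrthConvex S) {k r : ℕ}
    (hk : k + 2 * r < n) {i : Fin 2} (h : IsAxisSeg i (p k) (p (k + 1))) :
    IsAxisSeg i (p (k + 2 * r)) (p (k + 2 * r + 1)) ∧
      0 < (p (k + 1) i - p k i) * (p (k + 2 * r + 1) i - p (k + 2 * r) i) := by
  induction r with
  | zero =>
    have hne := sub_ne_zero.2 (h.apply_ne (hp.ne_succ hk)).symm
    exact ⟨h, mul_self_pos.2 hne⟩
  | succ r ih =>
    obtain ⟨hr, hpos⟩ := ih (by omega)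
    obtain ⟨hr', hpos'⟩ := hp.isAxisSeg_add_two hS (by omega) hr
    refine ⟨hr', ?_⟩
    rw [show k + 2 * (r + 1) = k + 2 * r + 2 by ring]
    nlinarith [mul_pos hpos hpos', sq_nonneg (p (k + 2 * r + 1) i - p (k + 2 * r) i)]

lemma isStaircaseIn (hp : IsShortestOrthPathIn S p n) (hS : OrthConvex S) :
    IsStaircaseIn S p n := by
  suffices key : ∀ k l i, k ≤ l → l < n → IsAxisSeg i (p k) (p (k + 1)) →
      0 ≤ (p (k + 1) i - p k i) * (p (l + 1) i - p l i) by
    refine ⟨hp.1, fun k hk l hl i hki hli => ?_⟩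
    rcases le_total k l with hkl | hlk
    · exact key k l i hkl hl hki
    · rw [mul_comm]; exact key l k i hlk hk hli
  intro k l i hkl hl hk
  obtain ⟨m, rfl⟩ := Nat.exists_eq_add_of_le hkl
  obtain ⟨r, rfl | rfl⟩ := Nat.even_or_odd' m
  · exact (hp.isAxisSeg_add_two_mul hS hl hk).2.le
  · have h := hp.apply_succ_eq hS (k := k + 2 * r) (by omega)
      (hp.isAxisSeg_add_two_mul hS (by omega) hk).1
    rw [show k + (2 * r + 1) + 1 = k + 2 * r + 2 by ring, ← add_assoc, ← h, sub_self, mul_zero]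

end IsShortestOrthPathIn

/-- `S ⊆ ℝ²` is staircase connected iff it is orthogonally connected and
orthogonally convex. -/
theorem staircaseConnected_iff_orthConnected_orthConvex (S : Set (EucR 2)) :
    StaircaseConnected S ↔ OrthConnected S ∧ OrthConvex S := by
  refine ⟨fun h => ⟨h.orthConnected, h.orthConvex⟩, fun ⟨hC, hS⟩ x hx y hy => ?_⟩
  obtain ⟨n, p, hp0, hpn, hp⟩ := hC.exists_isShortestOrthPathIn hx hy
  exact ⟨n, p, hp0, hpn, hp.isStaircaseIn hS⟩
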